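/- arXiv:1808.03416 — 4 statements merged into one kernel-verified Lean document; each statement's English description precedes it below -/
import Mathlib

section
/- Let V and H be complex Banach spaces with H a Hilbert space, let D be a bounded domain in V, and suppose there exists a holomorphic embedding f : D → B_H into the open unit ball of H. Then V is linearly homeomorphic to H. -/
open Metric Set Filter Topology

section LocalInverse

variable {𝕜 E F : Type*} [NontriviallyNormedField 𝕜]
  [NormedAddCommGroup E] [NormedSpace 𝕜 E] [NormedAddCommGroup F] [NormedSpace 𝕜 F]
  {f : E → F} {g : F → E} {f' : E →L[𝕜] F} {g' : F →L[𝕜] E} {x : E}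

theorem HasFDerivAt.comp_eq_id_of_eventually_leftInverse (hf : HasFDerivAt f f' x)
    (hg : HasFDerivAt g g' (f x)) (hgf : ∀ᶠ y in 𝓝 x, g (f y) = y) :
    g'.comp f' = ContinuousLinearMap.id 𝕜 E :=
  (hg.comp x hf).unique <| (hasFDerivAt_id x).congr_of_eventuallyEq hgf

def ContinuousLinearEquiv.ofHasFDerivAtLocalInverse (hf : HasFDerivAt f f' x)
    (hg : HasFDerivAt g g' (f x)) (hgf : ∀ᶠ y in 𝓝 x, g (f y) = y)
    (hfg : ∀ᶠ w in 𝓝 (f x), f (g w) = w) : E ≃L[𝕜] F :=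
  have hf' : HasFDerivAt f f' (g (f x)) := by rwa [hgf.self_of_nhds]
  ContinuousLinearEquiv.equivOfInverse f' g'
    (fun v => congrArg (· v) (hf.comp_eq_id_of_eventually_leftInverse hg hgf))
    (fun w => congrArg (· w) (hg.comp_eq_id_of_eventually_leftInverse hf' hfg))

end LocalInverse

theorem stmt_0_general
    {V : Type*} [NormedAddCommGroup V] [NormedSpace ℂ V]
    {H : Type*} [NormedAddCommGroup H] [InnerProductSpace ℂ H]
    (D : Set V) (hD : IsOpen D) (hDc : IsConnected D)
    (f : V → H) (g : H → V)
    (hf : DifferentiableOn ℂ f D)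
    (hfD : IsOpen (f '' D))
    (hg : DifferentiableOn ℂ g (f '' D))
    (hgf : ∀ z ∈ D, g (f z) = z) :
    Nonempty (V ≃L[ℂ] H) := by
  obtain ⟨p, hp⟩ := hDc.nonempty
  have hfp : f p ∈ f '' D := mem_image_of_mem f hp
  have hfg : ∀ w ∈ f '' D, f (g w) = w := by
    rintro w ⟨z, hz, rfl⟩
    rw [hgf z hz]
  exact ⟨.ofHasFDerivAtLocalInverse
    ((hf p hp).differentiableAt (hD.mem_nhds hp)).hasFDerivAt
    ((hg _ hfp).differentiableAt (hfD.mem_nhds hfp)).hasFDerivAt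
    (eventually_of_mem (hD.mem_nhds hp) hgf)
    (eventually_of_mem (hfD.mem_nhds hfp) hfg)⟩

/-- If a bounded domain `D` in a complex Banach space `V` admits a holomorphic
embedding into the open unit ball of a Hilbert space `H`, then `V` is linearly homeomorphic
to `H`. -/
theorem stmt_0
    {V : Type*} [NormedAddCommGroup V] [NormedSpace ℂ V] [CompleteSpace V]
    {H : Type*} [NormedAddCommGroup H] [InnerProductSpace ℂ H] [CompleteSpace H]
    (D : Set V) (hD : IsOpen D) (hDc : IsConnected D) (hDb : Bornology.IsBounded D)
    (f : V → H) (g : H → V)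
    (hf : DifferentiableOn ℂ f D)
    (hfD : IsOpen (f '' D)) (hfDc : IsConnected (f '' D))
    (hinj : Set.InjOn f D)
    (hg : DifferentiableOn ℂ g (f '' D))
    (hgf : ∀ z ∈ D, g (f z) = z)
    (hball : f '' D ⊆ ball (0 : H) 1) :
    Nonempty (V ≃L[ℂ] H) :=
  stmt_0_general D hD hDc f g hf hfD hg hgf
end

section
/- Let Ω be a bounded domain in a Banach space V that is linearly homeomorphic to a Hilbert space, and let (p_k) be a sequence in Ω with lim_{k→∞} σ_Ω(p_k) = 0, where σ_Ω is the squeezing function. Then there is a subsequence (p_j) such that lim_{j→∞} d(p_j, ∂Ω) = 0. -/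
/-!
If `ball q s ⊆ Ω ⊆ ball q ρ`, the affine embedding `z ↦ φ (z - q) / (ρ ‖φ‖)` maps `Ω` into the unit
ball and its image contains the ball of radius `s / (ρ ‖φ‖ ‖φ⁻¹‖)`, so
`s ≤ ρ ‖φ‖ ‖φ⁻¹‖ σ_Ω(q)`. Balls being connected, `s = d(q, ∂Ω)` is admissible, and `ρ = diam Ω + 1`
works for every `q ∈ Ω`. Hence `d(p_k, ∂Ω) ≤ C σ_Ω(p_k) → 0` along the whole sequence.
-/

open Metric Set Filter

/-- The squeezing function of a bounded domain `D ⊆ V`, defined via holomorphic embeddings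
of `D` into the open unit ball of the Hilbert space `H`. -/
noncomputable def squeezingFun (H : Type*) [NormedAddCommGroup H] [InnerProductSpace ℂ H]
    {V : Type*} [NormedAddCommGroup V] [NormedSpace ℂ V] (D : Set V) (p : V) : ℝ :=
  sSup {r : ℝ | 0 < r ∧ ∃ f : V → H, ∃ g : H → V,
    DifferentiableOn ℂ f D ∧ IsOpen (f '' D) ∧ Set.InjOn f D ∧
    DifferentiableOn ℂ g (f '' D) ∧ (∀ z ∈ D, g (f z) = z) ∧
    f '' D ⊆ ball (0 : H) 1 ∧ f p = 0 ∧ ball (0 : H) r ⊆ f '' D}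

theorem IsPreconnected.subset_of_disjoint_frontier {X : Type*} [TopologicalSpace X]
    {s u : Set X} (hs : IsPreconnected s) (hu : IsOpen u) (hsu : (s ∩ u).Nonempty)
    (hfr : Disjoint s (frontier u)) : s ⊆ u := by
  refine hs.subset_left_of_subset_union hu isClosed_closure.isOpen_compl
    (disjoint_compl_right.mono_right (compl_subset_compl.mpr subset_closure)) ?_ hsu
  intro x hx
  by_contra hxu
  simp only [mem_union, mem_compl_iff, not_or, not_not] at hxu
  exact hfr.ne_of_mem hx (hu.frontier_eq ▸ ⟨hxu.2, hxu.1⟩) rfl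

theorem ball_infDist_frontier_subset {V : Type*} [NormedAddCommGroup V] [NormedSpace ℝ V]
    {Ω : Set V} (hΩ : IsOpen Ω) {q : V} (hq : q ∈ Ω) :
    ball q (infDist q (frontier Ω)) ⊆ Ω := by
  rcases (ball q (infDist q (frontier Ω))).eq_empty_or_nonempty with h | h
  · simp [h]
  refine (convex_ball q _).isPreconnected.subset_of_disjoint_frontier hΩ
    ⟨q, mem_ball_self (nonempty_ball.mp h), hq⟩ ?_
  refine Set.disjoint_left.mpr fun x hx hxfr => ?_
  exact (mem_ball'.mp hx).not_ge (infDist_le_dist_of_mem hxfr)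

section Squeezing

variable {V : Type*} [NormedAddCommGroup V] [NormedSpace ℂ V]
  {H : Type*} [NormedAddCommGroup H] [InnerProductSpace ℂ H]

theorem squeezingFun_nonneg (D : Set V) (p : V) : 0 ≤ squeezingFun H D p :=
  Real.sSup_nonneg fun _ hr => hr.1.le

theorem le_squeezingFun [Nontrivial H] {D : Set V} {p : V} {r : ℝ} (hr : 0 < r)
    {f : V → H} {g : H → V} (hf : DifferentiableOn ℂ f D) (hfD : IsOpen (f '' D))
    (hg : DifferentiableOn ℂ g (f '' D)) (hgf : ∀ z ∈ D, g (f z) = z)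
    (hf1 : f '' D ⊆ ball 0 1) (hfp : f p = 0) (hrf : ball 0 r ⊆ f '' D) :
    r ≤ squeezingFun H D p := by
  refine le_csSup ⟨1, ?_⟩ ⟨hr, f, g, hf, hfD, ?_, hg, hgf, hf1, hfp, hrf⟩
  · rintro r' ⟨-, f', g', -, -, -, -, -, hf'1, -, hr'f⟩
    by_contra! h1r'
    obtain ⟨v, hv⟩ := exists_norm_eq H zero_le_one
    have hv' : v ∈ ball (0 : H) 1 := hf'1 (hr'f (by simpa [hv] using h1r'))
    simp [hv] at hv'
  · exact fun a ha b hb hab => by rw [← hgf a ha, ← hgf b hb, hab]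

theorem le_mul_squeezingFun_of_ball_subset [Nontrivial V] (φ : V ≃L[ℂ] H) {D : Set V}
    (hD : IsOpen D) {q : V} {ρ s : ℝ} (hs : 0 < s) (hsD : ball q s ⊆ D) (hDρ : D ⊆ ball q ρ) :
    s ≤ ρ * ‖(φ : V →L[ℂ] H)‖ * ‖(φ.symm : H →L[ℂ] V)‖ * squeezingFun H D q := by
  have hq : q ∈ D := hsD (mem_ball_self hs)
  have hρ : 0 < ρ := pos_of_mem_ball (hDρ hq)
  set a : ℝ := ρ * ‖(φ : V →L[ℂ] H)‖
  have ha : 0 < a := mul_pos hρ φ.norm_pos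
  have hφ' : 0 < ‖(φ.symm : H →L[ℂ] V)‖ := φ.norm_symm_pos
  set f : V → H := fun z => (a⁻¹ : ℂ) • φ (z - q)
  set g : H → V := fun w => φ.symm ((a : ℂ) • w) + q
  have ha' : (a : ℂ) ≠ 0 := Complex.ofReal_ne_zero.mpr ha.ne'
  have hgf : ∀ z, g (f z) = z := fun z => by
    simp only [f, g, smul_smul, mul_inv_cancel₀ ha', one_smul, φ.symm_apply_apply, sub_add_cancel]
  have hfg : ∀ w, f (g w) = w := fun w => by
    simp only [f, g, add_sub_cancel_right, φ.apply_symm_apply, smul_smul, inv_mul_cancel₀ ha',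
      one_smul]
  have hfD : f '' D = g ⁻¹' D := congrFun (image_eq_preimage_of_inverse hgf hfg) D
  have hg : Differentiable ℂ g := by fun_prop
  have hf1 : f '' D ⊆ ball 0 1 := by
    rintro _ ⟨z, hz, rfl⟩
    rw [mem_ball_zero_iff]
    calc ‖f z‖ = a⁻¹ * ‖φ (z - q)‖ := by
          rw [norm_smul, norm_inv, Complex.norm_real, Real.norm_of_nonneg ha.le]
      _ ≤ a⁻¹ * (‖(φ : V →L[ℂ] H)‖ * ‖z - q‖) := by
          gcongr; exact (φ : V →L[ℂ] H).le_opNorm _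
      _ < a⁻¹ * (‖(φ : V →L[ℂ] H)‖ * ρ) := by
          gcongr
          · exact φ.norm_pos
          · exact mem_ball_iff_norm.mp (hDρ hz)
      _ = 1 := by rw [mul_comm _ ρ]; exact inv_mul_cancel₀ ha.ne'
  have hrf : ball 0 (s / (a * ‖(φ.symm : H →L[ℂ] V)‖)) ⊆ f '' D := by
    intro w hw
    rw [mem_ball_zero_iff, lt_div_iff₀ (by positivity)] at hw
    rw [hfD]
    refine hsD (mem_ball_iff_norm.mpr ?_)
    calc ‖g w - q‖ = ‖φ.symm ((a : ℂ) • w)‖ := by simp only [g, add_sub_cancel_right]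
      _ ≤ ‖(φ.symm : H →L[ℂ] V)‖ * (a * ‖w‖) := by
          refine ((φ.symm : H →L[ℂ] V).le_opNorm _).trans_eq ?_
          rw [norm_smul, Complex.norm_real, Real.norm_of_nonneg ha.le]
      _ < s := by linarith
  have : Nontrivial H := φ.symm.toEquiv.nontrivial
  have hσ : s / (a * ‖(φ.symm : H →L[ℂ] V)‖) ≤ squeezingFun H D q :=
    le_squeezingFun (by positivity) (by fun_prop) (hfD ▸ hD.preimage hg.continuous)
      hg.differentiableOn (fun z _ => hgf z) hf1 (by simp [f]) hrf
  rwa [div_le_iff₀' (by positivity)] at hσ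

theorem infDist_frontier_le_mul_squeezingFun (φ : V ≃L[ℂ] H) {Ω : Set V} (hΩ : IsOpen Ω)
    (hΩb : Bornology.IsBounded Ω) {q : V} (hq : q ∈ Ω) :
    infDist q (frontier Ω) ≤
      (diam Ω + 1) * ‖(φ : V →L[ℂ] H)‖ * ‖(φ.symm : H →L[ℂ] V)‖ * squeezingFun H Ω q := by
  rcases (infDist_nonneg (x := q) (s := frontier Ω)).eq_or_lt with h0 | hpos
  · rw [← h0]
    exact mul_nonneg (by positivity) (squeezingFun_nonneg Ω q)
  obtain ⟨y, hy⟩ : (frontier Ω).Nonempty :=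
    nonempty_iff_ne_empty.mpr fun h => by simp [h] at hpos
  have : Nontrivial V := nontrivial_of_ne q y fun h => hΩ.inter_frontier_eq.subset ⟨hq, h ▸ hy⟩
  exact le_mul_squeezingFun_of_ball_subset φ hΩ hpos (ball_infDist_frontier_subset hΩ hq)
    fun z hz => mem_ball.mpr ((dist_le_diam_of_mem hΩb hz hq).trans_lt (lt_add_one _))

end Squeezing

theorem stmt_7_general
    {V : Type*} [NormedAddCommGroup V] [NormedSpace ℂ V]
    {H : Type*} [NormedAddCommGroup H] [InnerProductSpace ℂ H]
    (φ : V ≃L[ℂ] H)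
    (Ω : Set V) (hΩ : IsOpen Ω) (hΩb : Bornology.IsBounded Ω)
    (p : ℕ → V) (hmem : ∀ k, p k ∈ Ω)
    (hlim : Tendsto (fun k => squeezingFun H Ω (p k)) atTop (nhds 0)) :
    ∃ j : ℕ → ℕ, StrictMono j ∧
      Tendsto (fun n => infDist (p (j n)) (frontier Ω)) atTop (nhds 0) := by
  refine ⟨id, strictMono_id, ?_⟩
  set K := (diam Ω + 1) * ‖(φ : V →L[ℂ] H)‖ * ‖(φ.symm : H →L[ℂ] V)‖
  have hK : Tendsto (fun k => K * squeezingFun H Ω (p k)) atTop (nhds 0) := by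
    simpa using hlim.const_mul K
  exact squeeze_zero (fun _ => infDist_nonneg)
    (fun k => infDist_frontier_le_mul_squeezingFun φ hΩ hΩb (hmem k)) hK

/-- If `(p_k)` is a sequence in a bounded domain `Ω` in a Banach space `V`
linearly homeomorphic to a Hilbert space `H`, with `σ_Ω(p_k) → 0`, then some subsequence
`(p_{j(n)})` satisfies `d(p_{j(n)}, ∂Ω) → 0`. -/
theorem stmt_7
    {V : Type*} [NormedAddCommGroup V] [NormedSpace ℂ V] [CompleteSpace V]
    {H : Type*} [NormedAddCommGroup H] [InnerProductSpace ℂ H] [CompleteSpace H]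
    (φ : V ≃L[ℂ] H)
    (Ω : Set V) (hΩ : IsOpen Ω) (hΩc : IsConnected Ω) (hΩb : Bornology.IsBounded Ω)
    (p : ℕ → V) (hmem : ∀ k, p k ∈ Ω)
    (hlim : Tendsto (fun k => squeezingFun H Ω (p k)) atTop (nhds 0)) :
    ∃ j : ℕ → ℕ, StrictMono j ∧
      Tendsto (fun n => infDist (p (j n)) (frontier Ω)) atTop (nhds 0) :=
  stmt_7_general φ Ω hΩ hΩb p hmem hlim
end

section
/- Let U be a connected open subset of a Banach space V, let D be an open subset of V with U ∩ D ≠ ∅ and U ⊄ D, and let W₀ be a connected component of U ∩ D. Then ∂W₀ ∩ ∂D ∩ U ≠ ∅. -/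
/-! If `∂W₀ ∩ ∂D ∩ U` were empty, `W₀` would be closed in `U`: a point `p ∈ U` of `closure W₀`
outside `D` lies in both frontiers, and one inside `D` lies in `W₀` because `W₀ ∪ {p}` is still
connected. Being open as well, `W₀` would exhaust the connected set `U`, so `U ⊆ W₀ ⊆ D`. -/

open Set

theorem closure_connectedComponentIn_inter_subset {X : Type*} [TopologicalSpace X]
    (F : Set X) (x : X) : closure (connectedComponentIn F x) ∩ F ⊆ connectedComponentIn F x := by
  rintro p ⟨hpc, hpF⟩
  have hxF : x ∈ F := connectedComponentIn_nonempty_iff.mp (closure_nonempty_iff.mp ⟨p, hpc⟩)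
  have hx : x ∈ connectedComponentIn F x := mem_connectedComponentIn hxF
  have hconn : IsPreconnected (insert p (connectedComponentIn F x)) :=
    isPreconnected_connectedComponentIn.subset_closure (subset_insert _ _)
      (insert_subset hpc subset_closure)
  exact hconn.subset_connectedComponentIn (mem_insert_of_mem _ hx)
    (insert_subset hpF (connectedComponentIn_subset _ _)) (mem_insert _ _)

section

variable {X : Type*} [TopologicalSpace X] {U D : Set X} {x : X}

theorem mem_frontier_connectedComponentIn_inter_frontier (hD : IsOpen D) {p : X}
    (hpc : p ∈ closure (connectedComponentIn (U ∩ D) x)) (hpU : p ∈ U)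
    (hpW : p ∉ connectedComponentIn (U ∩ D) x) :
    p ∈ frontier (connectedComponentIn (U ∩ D) x) ∩ frontier D := by
  have hpD : p ∉ D := fun hpD =>
    hpW (closure_connectedComponentIn_inter_subset _ _ ⟨hpc, hpU, hpD⟩)
  have hpcD : p ∈ closure D :=
    closure_mono ((connectedComponentIn_subset _ _).trans inter_subset_right) hpc
  exact ⟨⟨hpc, fun h => hpW (interior_subset h)⟩, hpcD, by rwa [hD.interior_eq]⟩

theorem frontier_connectedComponentIn_inter_frontier_inter_nonempty [LocallyConnectedSpace X]
    (hU : IsOpen U) (hUc : IsPreconnected U) (hD : IsOpen D) (hx : x ∈ U ∩ D)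
    {y : X} (hyU : y ∈ U) (hyD : y ∉ D) :
    (frontier (connectedComponentIn (U ∩ D) x) ∩ frontier D ∩ U).Nonempty := by
  by_contra hempty
  have hclosed :
      closure (connectedComponentIn (U ∩ D) x) ∩ U ⊆ connectedComponentIn (U ∩ D) x := by
    rintro p ⟨hpc, hpU⟩
    by_contra hpW
    exact hempty ⟨p, mem_frontier_connectedComponentIn_inter_frontier hD hpc hpU hpW, hpU⟩
  have hUW : U ⊆ connectedComponentIn (U ∩ D) x :=
    hUc.subset_of_closure_inter_subset (hU.inter hD).connectedComponentIn
      ⟨x, hx.1, mem_connectedComponentIn hx⟩ hclosed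
  exact hyD (connectedComponentIn_subset _ _ (hUW hyU)).2

end

theorem stmt_9_general
    {V : Type*} [NormedAddCommGroup V] [NormedSpace ℝ V]
    (U D : Set V) (hU : IsOpen U) (hUc : IsConnected U) (hD : IsOpen D)
    (hns : ¬ U ⊆ D)
    (x : V) (hx : x ∈ U ∩ D) :
    (frontier (connectedComponentIn (U ∩ D) x) ∩ frontier D ∩ U).Nonempty := by
  obtain ⟨y, hyU, hyD⟩ := not_subset.mp hns
  exact frontier_connectedComponentIn_inter_frontier_inter_nonempty hU hUc.isPreconnected hD hx
    hyU hyD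

/-- If `U` is a connected open set in a Banach space `V`, `D ⊆ V` is open with
`U ∩ D ≠ ∅` and `U ⊄ D`, and `W₀` is a connected component of `U ∩ D`, then
`∂W₀ ∩ ∂D ∩ U ≠ ∅`. -/
theorem stmt_9
    {V : Type*} [NormedAddCommGroup V] [NormedSpace ℝ V] [CompleteSpace V]
    (U D : Set V) (hU : IsOpen U) (hUc : IsConnected U) (hD : IsOpen D)
    (hne : (U ∩ D).Nonempty) (hns : ¬ U ⊆ D)
    (x : V) (hx : x ∈ U ∩ D) :
    (frontier (connectedComponentIn (U ∩ D) x) ∩ frontier D ∩ U).Nonempty :=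
  stmt_9_general U D hU hUc hD hns x hx
end

section
/- Let H be a complex Hilbert space with orthonormal basis containing a distinguished unit vector e¹, write z = z₁e¹ + z^⊥ with z^⊥ ⊥ e¹. For R > 0, z ∈ B_H(R e¹, R) if and only if ‖z‖² < 2R·Re z₁. Moreover, with the Cayley transform Φ(z) = ((z₁−1)/(z₁+1))e¹ + (√2/(z₁+1))z^⊥ defined on {Re z₁ > 0}, and the dilation L_λ(z) = (z₁/λ)e¹ + (1/√λ)z^⊥ for λ > 0, one has Φ(L_λ(B_H(Re¹, R))) ⊂ B_H(0, √(1+R)). -/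
/-!
Write `z = a • e + v` with `v ⟂ e`. The ball condition reads `|a|² + ‖v‖² < 2R Re a`, and
`Φ (L_λ z) = ((c - 1)/(c + 1)) • e + (√2/(c + 1)) • (v/√λ)` with `c = a/λ`, so
`‖Φ (L_λ z)‖² < 1 + R` amounts to `|c - 1|² + 2‖v‖²/λ < (1 + R)|c + 1|²`. This follows from the
ball condition, since `|c + 1|² - |c - 1|² = 4 Re c` and `R |c - 1|² ≥ 0`.
-/

open Metric Set

variable {H : Type*} [NormedAddCommGroup H] [InnerProductSpace ℂ H]

/-- The Cayley transform `Φ(z) = ((z₁−1)/(z₁+1))e + (√2/(z₁+1))z^⊥` associated with a unit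
vector `e`, where `z₁ = ⟪e, z⟫` and `z^⊥ = z − z₁e`. -/
noncomputable def cayley (e : H) (z : H) : H :=
  (((inner ℂ e z : ℂ) - 1) / ((inner ℂ e z : ℂ) + 1)) • e +
    ((Real.sqrt 2 : ℂ) / ((inner ℂ e z : ℂ) + 1)) • (z - (inner ℂ e z : ℂ) • e)

/-- The dilation `L_λ(z) = (z₁/λ)e + (1/√λ)z^⊥`. -/
noncomputable def dilation (e : H) (lam : ℝ) (z : H) : H :=
  ((inner ℂ e z : ℂ) / (lam : ℂ)) • e +
    ((Real.sqrt lam : ℂ))⁻¹ • (z - (inner ℂ e z : ℂ) • e)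

section UnitVector

variable {𝕜 E : Type*} [RCLike 𝕜] [NormedAddCommGroup E] [InnerProductSpace 𝕜 E]
  {e v : E}

lemma inner_sub_inner_smul_self_eq_zero (he : ‖e‖ = 1) (z : E) :
    inner 𝕜 e (z - inner 𝕜 e z • e) = 0 := by
  rw [inner_sub_right, inner_smul_right, inner_self_eq_norm_sq_to_K, he]
  simp

lemma inner_smul_add_of_inner_eq_zero (he : ‖e‖ = 1) (hv : inner 𝕜 e v = 0) (a : 𝕜) :
    inner 𝕜 e (a • e + v) = a := by
  rw [inner_add_right, inner_smul_right, inner_self_eq_norm_sq_to_K, he, hv]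
  simp

lemma norm_smul_add_sq_of_inner_eq_zero (he : ‖e‖ = 1) (hv : inner 𝕜 e v = 0) (a : 𝕜) :
    ‖a • e + v‖ ^ 2 = ‖a‖ ^ 2 + ‖v‖ ^ 2 := by
  have horth : inner 𝕜 (a • e) v = 0 := by rw [inner_smul_left, hv, mul_zero]
  rw [sq, norm_add_sq_eq_norm_sq_add_norm_sq_of_inner_eq_zero _ _ horth, norm_smul, he]
  ring

end UnitVector

lemma norm_sub_smul_sq {e : H} (he : ‖e‖ = 1) (R : ℝ) (z : H) :
    ‖z - R • e‖ ^ 2 = ‖z‖ ^ 2 - 2 * R * (inner ℂ e z).re + R ^ 2 := by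
  rw [@norm_sub_sq ℂ, ← Complex.coe_smul, inner_smul_right, norm_smul, he]
  have hre : (inner ℂ z e).re = (inner ℂ e z).re := inner_re_symm (𝕜 := ℂ) z e
  simp [hre]
  ring

lemma mem_ball_smul_iff {e : H} (he : ‖e‖ = 1) {R : ℝ} (hR : 0 ≤ R) (z : H) :
    z ∈ ball (R • e) R ↔ ‖z‖ ^ 2 < 2 * R * (inner ℂ e z).re := by
  rw [mem_ball, dist_eq_norm, ← pow_lt_pow_iff_left₀ (norm_nonneg _) hR two_ne_zero,
    norm_sub_smul_sq he]
  constructor <;> intro h <;> linarith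

lemma norm_div_sub_one_sq_add_lt {a : ℂ} {u R lam : ℝ} (hR : 0 ≤ R) (hlam : 0 < lam)
    (hu : 0 ≤ u) (h : ‖a‖ ^ 2 + u < 2 * R * a.re) :
    ‖a / lam - 1‖ ^ 2 + 2 * (u / lam) < (1 + R) * ‖a / lam + 1‖ ^ 2 := by
  have hlam' : (lam : ℂ) ≠ 0 := by exact_mod_cast hlam.ne'
  obtain ⟨c, rfl⟩ : ∃ c : ℂ, a = lam * c := ⟨a / lam, by field_simp⟩
  simp only [mul_div_cancel_left₀ c hlam', ← Complex.normSq_eq_norm_sq, Complex.normSq_apply,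
    Complex.mul_re, Complex.mul_im, Complex.ofReal_re, Complex.ofReal_im, Complex.sub_re,
    Complex.sub_im, Complex.add_re, Complex.add_im, Complex.one_re, Complex.one_im,
    zero_mul, sub_zero, add_zero] at h ⊢
  have hu' : 2 * (u / lam) < 4 * R * c.re - 2 * lam * (c.re ^ 2 + c.im ^ 2) := by
    rw [mul_div_assoc', div_lt_iff₀ hlam]; nlinarith
  have hre : 0 ≤ c.re := by
    by_contra! hneg
    nlinarith [mul_nonneg (mul_nonneg hR hlam.le) (neg_nonneg.mpr hneg.le)]
  nlinarith [mul_nonneg hR (sq_nonneg (c.re - 1)), mul_nonneg hR (sq_nonneg c.im),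
    mul_nonneg hlam.le (add_nonneg (sq_nonneg c.re) (sq_nonneg c.im))]

section Cayley

variable {e v : H}

lemma cayley_smul_add (he : ‖e‖ = 1) (hv : inner ℂ e v = 0) (a : ℂ) :
    cayley e (a • e + v) = ((a - 1) / (a + 1)) • e + ((Real.sqrt 2 : ℂ) / (a + 1)) • v := by
  rw [cayley, inner_smul_add_of_inner_eq_zero he hv, add_sub_cancel_left]

lemma dilation_smul_add (he : ‖e‖ = 1) (hv : inner ℂ e v = 0) (lam : ℝ) (a : ℂ) :
    dilation e lam (a • e + v) = (a / lam) • e + ((Real.sqrt lam : ℂ))⁻¹ • v := by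
  rw [dilation, inner_smul_add_of_inner_eq_zero he hv, add_sub_cancel_left]

lemma norm_cayley_smul_add_sq (he : ‖e‖ = 1) (hv : inner ℂ e v = 0) {a : ℂ} (ha : a + 1 ≠ 0) :
    ‖cayley e (a • e + v)‖ ^ 2 = (‖a - 1‖ ^ 2 + 2 * ‖v‖ ^ 2) / ‖a + 1‖ ^ 2 := by
  have hv' : inner ℂ e (((Real.sqrt 2 : ℂ) / (a + 1)) • v) = 0 := by
    rw [inner_smul_right, hv, mul_zero]
  rw [cayley_smul_add he hv, norm_smul_add_sq_of_inner_eq_zero he hv', norm_smul, norm_div,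
    norm_div, Complex.norm_real, Real.norm_of_nonneg (Real.sqrt_nonneg 2)]
  field_simp
  rw [Real.sq_sqrt zero_le_two]
  ring

lemma norm_cayley_dilation_sq_lt (he : ‖e‖ = 1) (hv : inner ℂ e v = 0) {R lam : ℝ}
    (hR : 0 < R) (hlam : 0 < lam) {a : ℂ} (h : ‖a‖ ^ 2 + ‖v‖ ^ 2 < 2 * R * a.re) :
    ‖cayley e (dilation e lam (a • e + v))‖ ^ 2 < 1 + R := by
  have hv' : inner ℂ e (((Real.sqrt lam : ℂ))⁻¹ • v) = 0 := by
    rw [inner_smul_right, hv, mul_zero]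
  have hre : 0 < (a / lam).re := by
    rw [Complex.div_ofReal_re]
    exact div_pos (by nlinarith [sq_nonneg ‖a‖, sq_nonneg ‖v‖]) hlam
  have hne : a / lam + 1 ≠ 0 := fun h0 => by
    have h1 := congrArg Complex.re h0
    rw [Complex.add_re, Complex.one_re, Complex.zero_re] at h1
    linarith
  have hscale : ‖((Real.sqrt lam : ℂ))⁻¹ • v‖ ^ 2 = ‖v‖ ^ 2 / lam := by
    rw [norm_smul, norm_inv, Complex.norm_real, Real.norm_of_nonneg (Real.sqrt_nonneg _), mul_pow,
      inv_pow, Real.sq_sqrt hlam.le, inv_mul_eq_div]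
  rw [dilation_smul_add he hv, norm_cayley_smul_add_sq he hv' hne, hscale,
    div_lt_iff₀ (by positivity)]
  exact norm_div_sub_one_sq_add_lt hR.le hlam (sq_nonneg _) h

lemma mapsTo_cayley_comp_dilation_ball (he : ‖e‖ = 1) {R lam : ℝ} (hR : 0 < R) (hlam : 0 < lam) :
    MapsTo (cayley e ∘ dilation e lam) (ball (R • e) R) (ball 0 (Real.sqrt (1 + R))) := by
  intro z hz
  have hperp := inner_sub_inner_smul_self_eq_zero (𝕜 := ℂ) he z
  have hdecomp : z = inner ℂ e z • e + (z - inner ℂ e z • e) := (add_sub_cancel _ _).symm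
  rw [mem_ball_smul_iff he hR.le, hdecomp, norm_smul_add_sq_of_inner_eq_zero he hperp,
    inner_smul_add_of_inner_eq_zero he hperp] at hz
  rw [mem_ball_zero_iff, Real.lt_sqrt (norm_nonneg _), Function.comp_apply, hdecomp]
  exact norm_cayley_dilation_sq_lt he hperp hR hlam hz

end Cayley

theorem stmt_18_general
    (e : H) (he : ‖e‖ = 1) (R lam : ℝ) (hR : 0 < R) (hlam : 0 < lam) :
    (∀ z : H, z ∈ ball (R • e) R ↔ ‖z‖ ^ 2 < 2 * R * (inner ℂ e z : ℂ).re) ∧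
    (cayley e ∘ dilation e lam) '' ball (R • e) R ⊆ ball (0 : H) (Real.sqrt (1 + R)) :=
  ⟨mem_ball_smul_iff he hR.le, (mapsTo_cayley_comp_dilation_ball he hR hlam).image_subset⟩

/-- For a unit vector `e` in a Hilbert space `H`: `z ∈ B_H(Re, R)` iff
`‖z‖² < 2R·Re z₁` where `z₁ = ⟪e, z⟫`; and for `λ > 0` the Cayley transform composed with
the dilation maps `B_H(Re, R)` into `B_H(0, √(1+R))`. -/
theorem stmt_18 [CompleteSpace H]
    (e : H) (he : ‖e‖ = 1) (R lam : ℝ) (hR : 0 < R) (hlam : 0 < lam) :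
    (∀ z : H, z ∈ ball (R • e) R ↔ ‖z‖ ^ 2 < 2 * R * (inner ℂ e z : ℂ).re) ∧
    (cayley e ∘ dilation e lam) '' ball (R • e) R ⊆ ball (0 : H) (Real.sqrt (1 + R)) :=
  stmt_18_general e he R lam hR hlam
end
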